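/- Let f be an FIF on SG with uniform vertical scaling factor d, where d ≠ 3/5. Then for every nonnegative integer m, Δ_{m+1}f(P_1(q_2)) = (d·(Δ₁²f(q₂) + Δ₁¹f(q₁) + (3/5)·Δ₀f(q₃))/(3/5 − d))·((3/5)^m − d^m) + Δ₁f(P_1(q_2))·(3/5)^m, where Δ₀f(q₃) = f(q₁) + f(q₂) − 2f(q₃), Δ₁ⁱf(q_i) = f(P_i(q_j)) + f(P_i(q_k)) − 2f(q_i) for {i,j,k} = {1,2,3}, and Δ₁f(P_1(q_2)) = f(q₁) + f(P_1(q_3)) + f(q₂) + f(P_2(q_3)) − 4f(P_1(q_2)). -/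

import Mathlib

open Finset Filter

noncomputable section

/-- Points in the plane. -/
abbrev Pt := Fin 2 → ℝ

/-- The three contraction maps `P_i(x) = (x + q_i)/2`. -/
def Pmap (q : Fin 3 → Pt) (i : Fin 3) (x : Pt) : Pt := (x + q i) / 2

/-- `Pw q m ω = P_{ω 0} ∘ P_{ω 1} ∘ ⋯ ∘ P_{ω (m-1)}` for a word `ω` of length `m`. -/
def Pw (q : Fin 3 → Pt) : (m : ℕ) → (Fin m → Fin 3) → Pt → Pt
  | 0, _, x => x
  | m + 1, ω, x => Pmap q (ω 0) (Pw q m (fun k => ω k.succ) x)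

/-- The level-`m` vertex set `V_m`. -/
def V (q : Fin 3 → Pt) (m : ℕ) : Set Pt :=
  {x | ∃ ω : Fin m → Fin 3, ∃ i : Fin 3, x = Pw q m ω (q i)}

/-- `V_* = ⋃ m, V_m`. -/
def Vstar (q : Fin 3 → Pt) : Set Pt := ⋃ m, V q m

/-- The Sierpinski gasket, as the closure of `V_*`. -/
def SG (q : Fin 3 → Pt) : Set Pt := closure (Vstar q)

/-- The level-`m` graph energy. -/
def energy (q : Fin 3 → Pt) (m : ℕ) (u : Pt → ℝ) : ℝ :=
  (5/3 : ℝ)^m * ∑ ω : Fin m → Fin 3,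
    ∑ p ∈ Finset.univ.filter (fun p : Fin 3 × Fin 3 => p.1 < p.2),
      (u (Pw q m ω (q p.1)) - u (Pw q m ω (q p.2)))^2

/-- The level-`m` bilinear graph energy. -/
def energyBil (q : Fin 3 → Pt) (m : ℕ) (u v : Pt → ℝ) : ℝ :=
  (5/3 : ℝ)^m * ∑ ω : Fin m → Fin 3,
    ∑ p ∈ Finset.univ.filter (fun p : Fin 3 × Fin 3 => p.1 < p.2),
      (u (Pw q m ω (q p.1)) - u (Pw q m ω (q p.2))) *
        (v (Pw q m ω (q p.1)) - v (Pw q m ω (q p.2)))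

open scoped Classical in
/-- The level-`m` graph Laplacian at `x`. -/
def graphLap (q : Fin 3 → Pt) (m : ℕ) (u : Pt → ℝ) (x : Pt) : ℝ :=
  ∑ ω : Fin m → Fin 3,
    ∑ p ∈ Finset.univ.filter (fun p : Fin 3 × Fin 3 => p.1 ≠ p.2 ∧ Pw q m ω (q p.1) = x),
      (u (Pw q m ω (q p.2)) - u x)

/-- A function is harmonic on `SG` if it is continuous on `SG` and satisfies
the `1/5-2/5` rule. -/
def IsHarmonic (q : Fin 3 → Pt) (h : Pt → ℝ) : Prop :=
  ContinuousOn h (SG q) ∧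
  ∀ (m : ℕ) (ω : Fin m → Fin 3) (i j k : Fin 3), i ≠ j → j ≠ k → i ≠ k →
    h (Pw q m ω (Pmap q i (q j))) =
      2/5 * h (Pw q m ω (q i)) + 2/5 * h (Pw q m ω (q j)) + 1/5 * h (Pw q m ω (q k))

/-- `f` is a fractal interpolation function on `SG` with vertical scaling factors `d i`. -/
def IsFIF (q : Fin 3 → Pt) (d : Fin 3 → ℝ) (f : Pt → ℝ) : Prop :=
  ContinuousOn f (SG q) ∧
  ∃ h : Fin 3 → Pt → ℝ, (∀ i, IsHarmonic q (h i)) ∧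
    ∀ i, ∀ x ∈ SG q, f (Pmap q i x) = d i * f x + h i x


/-!
Only the two cells `P₁P₂^m(SG)` and `P₂P₁^m(SG)` of level `m + 1` contain the junction point
`P₁(q₂)`, as barycentric coordinates with respect to `q₁, q₂, q₃` show, so `Δ_{m+1}f(P₁(q₂))` is
the sum of their contributions `u(y) + u(z) - 2u(x)`. By `f ∘ P_i = d f + h_i`, the contribution
of a cell `P_i C` is `d` times that of `C` plus that of `h_i`, and by the `1/5–2/5` rule the
contribution of `P_i^n(SG)` to a harmonic function decays like `(3/5)^n`. Hence the total
contribution `S_n` of `P₁^n(SG)` and `P₂^n(SG)` to `f` satisfies `S_{n+1} = d S_n + (3/5)^n σ`,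
while `Δ_{n+1}f(P₁(q₂)) = d S_n + (3/5)^n γ`; solving the recurrence gives the formula.
-/

lemma eq_of_succ_eq_mul_add_pow_mul {K : Type*} [Field K] {x : ℕ → K} {r d c : K}
    (hrd : r ≠ d) (hx : ∀ n, x (n + 1) = d * x n + r ^ n * c) (n : ℕ) :
    x n = d ^ n * x 0 + c / (r - d) * (r ^ n - d ^ n) := by
  have hrd' : r - d ≠ 0 := sub_ne_zero.mpr hrd
  induction n with
  | zero => simp
  | succ n ih =>
    rw [hx, ih]
    field_simp
    ring

section Maps

variable (q : Fin 3 → Pt)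

lemma Pmap_eq_midpoint (a : Fin 3) (x : Pt) : Pmap q a x = midpoint ℝ x (q a) := by
  funext j
  simp only [Pmap, Pi.div_apply, Pi.add_apply, Pi.ofNat_apply, pi_midpoint_apply,
    midpoint_eq_smul_add, invOf_eq_inv, smul_eq_mul]
  ring

@[simp]
lemma Pmap_apply_self (a : Fin 3) : Pmap q a (q a) = q a := by
  simp [Pmap_eq_midpoint]

lemma Pmap_injective (a : Fin 3) : Function.Injective (Pmap q a) := by
  intro x y hxy
  funext j
  have := congrFun hxy j
  simp only [Pmap, Pi.div_apply, Pi.add_apply, Pi.ofNat_apply] at this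
  linarith

lemma Pmap_comm (a a' : Fin 3) : Pmap q a (q a') = Pmap q a' (q a) := by
  simp only [Pmap_eq_midpoint, midpoint_comm]

lemma Pw_cons (m : ℕ) (a : Fin 3) (ω : Fin m → Fin 3) (x : Pt) :
    Pw q (m + 1) (Fin.cons a ω) x = Pmap q a (Pw q m ω x) := by
  simp [Pw]

lemma Pw_const (n : ℕ) (i : Fin 3) : Pw q n (fun _ => i) = (Pmap q i)^[n] := by
  funext x
  induction n with
  | zero => rfl
  | succ n ih => rw [Function.iterate_succ_apply', ← ih, Pw]

lemma Pw_mem_SG (m : ℕ) (ω : Fin m → Fin 3) (j : Fin 3) : Pw q m ω (q j) ∈ SG q :=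
  subset_closure (Set.mem_iUnion.mpr ⟨m, ω, j, rfl⟩)

lemma iterate_Pmap_mem_SG (n : ℕ) (i j : Fin 3) : (Pmap q i)^[n] (q j) ∈ SG q := by
  simpa [Pw_const] using Pw_mem_SG q n (fun _ => i) j

end Maps

/-- The contribution of the cell `P_i^n(SG)` to a graph Laplacian of `u` at its corner
`P_i^n(q_i) = q_i`. -/
def cellLap (q : Fin 3 → Pt) (u : Pt → ℝ) (n : ℕ) (i j k : Fin 3) : ℝ :=
  u ((Pmap q i)^[n] (q j)) + u ((Pmap q i)^[n] (q k)) - 2 * u ((Pmap q i)^[n] (q i))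

section CellLap

variable {q : Fin 3 → Pt}

lemma cellLap_succ (u : Pt → ℝ) (n : ℕ) (i j k : Fin 3) :
    cellLap q u (n + 1) i j k = cellLap q (u ∘ Pmap q i) n i j k := by
  simp only [cellLap, Function.iterate_succ_apply', Function.comp_apply]

lemma IsHarmonic.cellLap_eq {h : Pt → ℝ} (hh : IsHarmonic q h) {i j k : Fin 3}
    (hij : i ≠ j) (hjk : j ≠ k) (hik : i ≠ k) (n : ℕ) :
    cellLap q h n i j k = (3 / 5) ^ n * cellLap q h 0 i j k := by
  induction n with
  | zero => simp
  | succ n ih =>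
    have hstep : cellLap q h (n + 1) i j k = 3 / 5 * cellLap q h n i j k := by
      simp only [cellLap, Function.iterate_succ_apply, Pmap_apply_self, ← Pw_const]
      rw [hh.2 n _ i j k hij hjk hik, hh.2 n _ i k j hik hjk.symm hij]
      ring
    rw [hstep, ih, pow_succ]
    ring

lemma cellLap_comp_Pmap {f g : Pt → ℝ} {a : Fin 3} {d : ℝ}
    (hf : ∀ x ∈ SG q, f (Pmap q a x) = d * f x + g x) (n : ℕ) (i j k : Fin 3) :
    cellLap q (f ∘ Pmap q a) n i j k = d * cellLap q f n i j k + cellLap q g n i j k := by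
  simp only [cellLap, Function.comp_apply, hf _ (iterate_Pmap_mem_SG q _ _ _)]
  ring

end CellLap

lemma graphLap_eq_sum (q : Fin 3 → Pt) (m : ℕ) (u : Pt → ℝ) (x : Pt)
    (S : Finset ((Fin m → Fin 3) × Fin 3)) (hS : ∀ ω j, Pw q m ω (q j) = x ↔ (ω, j) ∈ S) :
    graphLap q m u x = ∑ p ∈ S, ∑ k ∈ univ.erase p.2, (u (Pw q m p.1 (q k)) - u x) := by
  classical
  have hS' : S = univ.filter fun p => Pw q m p.1 (q p.2) = x := by
    ext p
    simp [hS]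
  rw [hS', Finset.sum_filter, Fintype.sum_prod_type, graphLap]
  refine Finset.sum_congr rfl fun ω _ => ?_
  rw [Finset.sum_filter, Fintype.sum_prod_type]
  refine Finset.sum_congr rfl fun i _ => ?_
  split_ifs with hi
  · rw [← Finset.sum_filter]
    congr 1
    ext k
    simp [hi, eq_comm]
  · simp [hi]

section Barycentric

variable (b : AffineBasis (Fin 3) ℝ Pt)

lemma coord_Pmap (i a : Fin 3) (x : Pt) :
    b.coord i (Pmap b a x) = (b.coord i x + b.coord i (b a)) / 2 := by
  rw [Pmap_eq_midpoint, AffineMap.map_midpoint, midpoint_eq_smul_add, smul_eq_mul, invOf_eq_inv]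
  ring

lemma coord_Pw_nonneg (m : ℕ) (ω : Fin m → Fin 3) (i j : Fin 3) :
    0 ≤ b.coord i (Pw b m ω (b j)) := by
  induction m with
  | zero => rw [Pw, b.coord_apply]; split_ifs <;> norm_num
  | succ m ih =>
    rw [Pw, coord_Pmap, b.coord_apply]
    have := ih (fun k => ω k.succ)
    split_ifs <;> linarith

variable {b}

lemma eq_of_Pmap_eq_vertex {a i : Fin 3} {y : Pt} (hy : ∀ l, 0 ≤ b.coord l y)
    (h : Pmap b a y = b i) : a = i ∧ y = b i := by
  obtain rfl : a = i := by
    by_contra hai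
    have := congrArg (b.coord a) h
    rw [coord_Pmap, b.coord_apply, b.coord_apply, if_pos rfl, if_neg hai] at this
    linarith [hy a]
  exact ⟨rfl, Pmap_injective b a (h.trans (Pmap_apply_self b a).symm)⟩

lemma eq_of_Pmap_eq_junction {a : Fin 3} {y : Pt} (hy : ∀ l, 0 ≤ b.coord l y)
    (h : Pmap b a y = Pmap b 0 (b 1)) : (a = 0 ∧ y = b 1) ∨ (a = 1 ∧ y = b 0) := by
  fin_cases a
  · exact .inl ⟨rfl, Pmap_injective b 0 h⟩
  · exact .inr ⟨rfl, Pmap_injective b 1 (h.trans (Pmap_comm b 0 1))⟩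
  · have := congrArg (b.coord 2) h
    simp [coord_Pmap, b.coord_apply] at this
    linarith [hy 2]

lemma Pw_eq_vertex {m : ℕ} {ω : Fin m → Fin 3} {i j : Fin 3} (h : Pw b m ω (b j) = b i) :
    ω = (fun _ => i) ∧ j = i := by
  induction m with
  | zero => exact ⟨Subsingleton.elim _ _, b.ind.injective h⟩
  | succ m ih =>
    induction ω using Fin.consCases with
    | _ a ω =>
      rw [Pw_cons] at h
      obtain ⟨rfl, hω⟩ := eq_of_Pmap_eq_vertex (coord_Pw_nonneg b m ω · j) h
      obtain ⟨rfl, rfl⟩ := ih hω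
      exact ⟨Fin.cons_self_tail fun _ => j, rfl⟩

lemma Pw_succ_eq_junction_iff {m : ℕ} (ω : Fin (m + 1) → Fin 3) (j : Fin 3) :
    Pw b (m + 1) ω (b j) = Pmap b 0 (b 1) ↔
      (ω, j) ∈ ({(Fin.cons 0 fun _ => 1, 1), (Fin.cons 1 fun _ => 0, 0)} : Finset _) := by
  induction ω using Fin.consCases with
  | _ a ω =>
    simp only [Finset.mem_insert, Finset.mem_singleton, Prod.mk.injEq, Fin.cons_inj, Pw_cons]
    constructor
    · intro h
      rcases eq_of_Pmap_eq_junction (coord_Pw_nonneg b m ω · j) h with ⟨rfl, hω⟩ | ⟨rfl, hω⟩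
      · exact .inl ⟨⟨rfl, (Pw_eq_vertex hω).1⟩, (Pw_eq_vertex hω).2⟩
      · exact .inr ⟨⟨rfl, (Pw_eq_vertex hω).1⟩, (Pw_eq_vertex hω).2⟩
    · rintro (⟨⟨rfl, rfl⟩, rfl⟩ | ⟨⟨rfl, rfl⟩, rfl⟩) <;>
        simp [Pw_const, Function.iterate_fixed, Pmap_comm b 1 0]

end Barycentric

lemma graphLap_junction (b : AffineBasis (Fin 3) ℝ Pt) (u : Pt → ℝ) (m : ℕ) :
    graphLap b (m + 1) u (Pmap b 0 (b 1)) =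
      cellLap b (u ∘ Pmap b 0) m 1 0 2 + cellLap b (u ∘ Pmap b 1) m 0 1 2 := by
  rw [graphLap_eq_sum b (m + 1) u _ _ Pw_succ_eq_junction_iff,
    Finset.sum_pair (by simp [Fin.cons_inj]), show univ.erase (1 : Fin 3) = {0, 2} by decide,
    show univ.erase (0 : Fin 3) = {1, 2} by decide, Finset.sum_pair (by decide),
    Finset.sum_pair (by decide)]
  simp only [cellLap, Pw_cons, Pw_const, Function.comp_apply,
    Function.iterate_fixed (Pmap_apply_self b _), Pmap_comm b 1 0]
  ring

/-- `q 0, q 1, q 2` play the roles of `q₁, q₂, q₃`. -/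
theorem stmt_8_general (q : Fin 3 → Pt) (hq : AffineIndependent ℝ q)
    (d : ℝ) (hd3 : d ≠ 3/5)
    (f : Pt → ℝ) (hf : IsFIF q (fun _ => d) f) (m : ℕ) :
    graphLap q (m+1) f (Pmap q 0 (q 1)) =
      d * ((f (Pmap q 1 (q 0)) + f (Pmap q 1 (q 2)) - 2 * f (q 1))
            + (f (Pmap q 0 (q 1)) + f (Pmap q 0 (q 2)) - 2 * f (q 0))
            + (3/5) * (f (q 0) + f (q 1) - 2 * f (q 2))) / (3/5 - d)
          * ((3/5 : ℝ)^m - d^m)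
        + (f (q 0) + f (Pmap q 0 (q 2)) + f (q 1) + f (Pmap q 1 (q 2))
            - 4 * f (Pmap q 0 (q 1))) * (3/5 : ℝ)^m := by
  obtain ⟨-, h, hh, hfh⟩ := hf
  obtain ⟨b, rfl⟩ : ∃ b : AffineBasis (Fin 3) ℝ Pt, ⇑b = q :=
    ⟨⟨q, hq, by simp [hq.affineSpan_eq_top_iff_card_eq_finrank_add_one]⟩, rfl⟩
  have hcell (n : ℕ) (i j k : Fin 3) (hij : i ≠ j) (hjk : j ≠ k) (hik : i ≠ k) :
      cellLap b f (n + 1) i j k =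
        d * cellLap b f n i j k + (3 / 5) ^ n * cellLap b (h i) 0 i j k := by
    rw [cellLap_succ, cellLap_comp_Pmap (hfh i), (hh i).cellLap_eq hij hjk hik]
  set S : ℕ → ℝ := fun n => cellLap b f n 0 1 2 + cellLap b f n 1 0 2 with hS
  have hSrec (n : ℕ) : S (n + 1) = d * S n + (3 / 5) ^ n * (S 1 - d * S 0) := by
    simp only [hS, hcell _ 0 1 2 (by decide) (by decide) (by decide),
      hcell _ 1 0 2 (by decide) (by decide) (by decide), pow_zero]
    ring
  have hjunction (n : ℕ) : graphLap b (n + 1) f (Pmap b 0 (b 1)) =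
      d * S n + (3 / 5) ^ n * (graphLap b 1 f (Pmap b 0 (b 1)) - d * S 0) := by
    simp only [graphLap_junction, hS, cellLap_comp_Pmap (hfh _)]
    rw [(hh 0).cellLap_eq (by decide : (1 : Fin 3) ≠ 0) (by decide) (by decide) n,
      (hh 1).cellLap_eq (by decide : (0 : Fin 3) ≠ 1) (by decide) (by decide) n]
    ring
  rw [hjunction, eq_of_succ_eq_mul_add_pow_mul (Ne.symm hd3) hSrec, graphLap_junction b f 0]
  simp only [hS, cellLap, Function.iterate_zero, Function.iterate_one, id, Function.comp_apply,
    Pmap_apply_self, Pmap_comm b 1 0]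
  -- the form in which `field_simp` meets the denominator `3/5 - d`
  have hne : (3 : ℝ) - d * 5 ≠ 0 := by contrapose! hd3; linarith
  field_simp
  ring

/-- for an FIF with uniform vertical scaling factor `d ≠ 3/5`,
the explicit formula for `Δ_{m+1} f (q_{12})`.  Here `q 0, q 1, q 2` play the
roles of `q₁, q₂, q₃`. -/
theorem stmt_8 (q : Fin 3 → Pt) (hq : AffineIndependent ℝ q)
    (d : ℝ) (hd : d ∈ Set.Ioo (-1 : ℝ) 1) (hd3 : d ≠ 3/5)
    (f : Pt → ℝ) (hf : IsFIF q (fun _ => d) f) (m : ℕ) :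
    graphLap q (m+1) f (Pmap q 0 (q 1)) =
      d * ((f (Pmap q 1 (q 0)) + f (Pmap q 1 (q 2)) - 2 * f (q 1))
            + (f (Pmap q 0 (q 1)) + f (Pmap q 0 (q 2)) - 2 * f (q 0))
            + (3/5) * (f (q 0) + f (q 1) - 2 * f (q 2))) / (3/5 - d)
          * ((3/5 : ℝ)^m - d^m)
        + (f (q 0) + f (Pmap q 0 (q 2)) + f (q 1) + f (Pmap q 1 (q 2))
            - 4 * f (Pmap q 0 (q 1))) * (3/5 : ℝ)^m :=
  stmt_8_general q hq d hd3 f hf m
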